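/- Assume C satisfies condition (⋆). Then C is mp if and only if O(p) ⊔ O(q) = ⊤ for all distinct minimal primes p,q of C. -/

import Mathlib

/-!
For a compact `a` below a minimal prime `p` there are a compact `b ≰ p` and an `n` with
`[a,b]^n = ⊥`: otherwise the compact elements above some `[a,c]^n` with `c ≰ p` form a
commutator-closed system avoiding `⊥`, and an element maximal among those above no member of
it is a prime below `p` but not above `a`. Condition (⋆) then gives `[[a,a]^m,[b,b]^m] = ⊥`,
so `[b,b]^m ≤ ([a,a]^m)⊥ ≰ p` and `[a,a]^m ≤ O(p)`. Hence a minimal prime lies below every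
prime above its `O`, and a prime above `O(p) ⊔ O(q) ≠ ⊤` lies above both `p` and `q`.
Conversely `O(p) ≤ p` for every prime `p`, so distinct minimal primes `p, q` below one prime `r`
would force `⊤ = O(p) ⊔ O(q) ≤ r`.
-/

open CompleteLattice

/-- A complete lattice equipped with a commutator operation, axiomatizing the congruence
lattice of an algebra in a semidegenerate congruence-modular variety whose compact
congruences are closed under the commutator. -/
class CommutatorLattice (C : Type*) [CompleteLattice C] where
  comm : C → C → C
  comm_comm : ∀ a b : C, comm a b = comm b a
  comm_sSup : ∀ (s : Set C) (b : C), comm (sSup s) b = ⨆ a ∈ s, comm a b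
  comm_le_inf : ∀ a b : C, comm a b ≤ a ⊓ b
  comm_top : ∀ a : C, comm a ⊤ = a
  compactlyGenerated : ∀ x : C,
    ∃ s : Set C, (∀ a ∈ s, IsCompactElement a) ∧ sSup s = x
  top_isCompact : IsCompactElement (⊤ : C)
  comm_isCompact : ∀ a b : C, IsCompactElement a → IsCompactElement b →
    IsCompactElement (comm a b)

namespace CommutatorLattice

variable {C : Type*} [CompleteLattice C] [CommutatorLattice C]

/-- The residuation `a → b := ⨆ {c | [a,c] ≤ b}`. -/
def resid (a b : C) : C := sSup {c : C | comm a c ≤ b}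

/-- The annihilator `a⊥ := a → ⊥`. -/
def ann (a : C) : C := resid a ⊥

/-- Iterated commutator: `cpow a n = [a,a]^n`, with the convention `[a,a]^0 = a`.
Note that `[a,b]^n` for `n ≥ 1` equals `cpow (comm a b) (n-1)`. -/
def cpow (a : C) : ℕ → C
  | 0 => a
  | n + 1 => comm (cpow a n) (cpow a n)

/-- Prime elements: `p ≠ ⊤` and `[a,b] ≤ p` implies `a ≤ p` or `b ≤ p`. -/
def IsPrime (p : C) : Prop := p ≠ ⊤ ∧ ∀ a b : C, comm a b ≤ p → a ≤ p ∨ b ≤ p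

/-- The radical `ρ(a) := ⨅ {p prime | a ≤ p}`. -/
def radical (a : C) : C := sInf {p : C | IsPrime p ∧ a ≤ p}

variable (C) in
/-- `C` is semiprime if `ρ(⊥) = ⊥`. -/
def Semiprime : Prop := radical (⊥ : C) = ⊥

variable (C) in
/-- Condition (⋆): for all compact `a`, `b` and all `n ≥ 1` there is `m ≥ 0` with
`[[a,a]^m, [b,b]^m] ≤ [a,b]^n`.  Here `cpow (comm a b) n = [a,b]^(n+1)`, so `n : ℕ`
ranges exactly over the exponents `≥ 1` of the paper. -/
def Star : Prop := ∀ a b : C, IsCompactElement a → IsCompactElement b →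
  ∀ n : ℕ, ∃ m : ℕ, comm (cpow a m) (cpow b m) ≤ cpow (comm a b) n

/-- Pure elements: `t ⊔ a⊥ = ⊤` for every compact `a ≤ t`. -/
def IsPure (t : C) : Prop := ∀ a : C, IsCompactElement a → a ≤ t → t ⊔ ann a = ⊤

/-- w-pure elements: `t ⊔ (a → ρ(⊥)) = ⊤` for every compact `a ≤ t`. -/
def IsWPure (t : C) : Prop :=
  ∀ a : C, IsCompactElement a → a ≤ t → t ⊔ resid a (radical ⊥) = ⊤

/-- Complemented elements. -/
def IsComplEl (a : C) : Prop := ∃ b : C, a ⊔ b = ⊤ ∧ a ⊓ b = ⊥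

/-- Regular elements: joins of sets of complemented elements. -/
def IsRegular (t : C) : Prop := ∃ S : Set C, (∀ a ∈ S, IsComplEl a) ∧ t = sSup S

/-- Max-regular elements: maximal among regular elements distinct from `⊤`. -/
def IsMaxRegular (t : C) : Prop :=
  IsRegular t ∧ t ≠ ⊤ ∧ ∀ u : C, IsRegular u → u ≠ ⊤ → t ≤ u → u = t

/-- Maximal elements of `C \ {⊤}`. -/
def IsMaximal (p : C) : Prop := p ≠ ⊤ ∧ ∀ q : C, q ≠ ⊤ → p ≤ q → q = p

/-- Minimal primes. -/
def IsMinPrime (p : C) : Prop := IsPrime p ∧ ∀ q : C, IsPrime q → q ≤ p → q = p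

variable (C) in
/-- `C` is mp if every prime lies above a unique minimal prime. -/
def MP : Prop := ∀ p : C, IsPrime p → ∃! q : C, IsMinPrime q ∧ q ≤ p

variable (C) in
/-- `C` is PF if `a⊥` is pure for every compact `a`. -/
def PF : Prop := ∀ a : C, IsCompactElement a → IsPure (ann a)

variable (C) in
/-- `C` is PP if `a⊥` is complemented for every compact `a`. -/
def PP : Prop := ∀ a : C, IsCompactElement a → IsComplEl (ann a)

/-- `O(p) := ⨆ {a compact | a⊥ ≰ p}`. -/
def O (p : C) : C := sSup {a : C | IsCompactElement a ∧ ¬ ann a ≤ p}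

variable (C) in
/-- `C` is normal. -/
def Normal : Prop := ∀ t u : C, t ⊔ u = ⊤ →
  ∃ a b : C, t ⊔ a = ⊤ ∧ u ⊔ b = ⊤ ∧ comm a b = ⊥

variable (C) in
/-- `C` is B-normal. -/
def BNormal : Prop := ∀ t u : C, t ⊔ u = ⊤ →
  ∃ a b : C, IsComplEl a ∧ IsComplEl b ∧ t ⊔ a = ⊤ ∧ u ⊔ b = ⊤ ∧ comm a b = ⊥

variable (C) in
/-- `C` is purified. -/
def Purified : Prop := ∀ p q : C, IsMinPrime p → IsMinPrime q → p ≠ q →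
  ∃ a : C, IsComplEl a ∧ a ≤ p ∧ ann a ≤ q

variable (C) in
/-- The prime spectrum of `C`. -/
abbrev Spec := {p : C // IsPrime p}

variable (C) in
/-- The Zariski topology on `Spec C`: the closed sets are the `V(t) = {p | t ≤ p}`,
equivalently the topology generated by the sets `D(t) = {p | t ≰ p}`. -/
def zariskiTop : TopologicalSpace (Spec C) :=
  TopologicalSpace.generateFrom {U : Set (Spec C) | ∃ t : C, U = {p : Spec C | ¬ t ≤ p.1}}

variable (C) in
/-- The flat topology on `Spec C`: generated by the open basis `V(a)`, `a` compact. -/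
def flatTop : TopologicalSpace (Spec C) :=
  TopologicalSpace.generateFrom
    {U : Set (Spec C) | ∃ a : C, IsCompactElement a ∧ U = {p : Spec C | a ≤ p.1}}

instance : IsCompactlyGenerated C := ⟨compactlyGenerated⟩

theorem comm_sup (a b c : C) : comm (a ⊔ b) c = comm a c ⊔ comm b c := by
  rw [← sSup_pair, comm_sSup, iSup_pair]

theorem comm_le_left (a b : C) : comm a b ≤ a := (comm_le_inf a b).trans inf_le_left

theorem comm_le_right (a b : C) : comm a b ≤ b := (comm_le_inf a b).trans inf_le_right

theorem comm_mono_left {a a' : C} (h : a ≤ a') (b : C) : comm a b ≤ comm a' b :=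
  calc comm a b ≤ comm a b ⊔ comm a' b := le_sup_left
    _ = comm a' b := by rw [← comm_sup, sup_eq_right.2 h]

theorem comm_mono {a a' b b' : C} (ha : a ≤ a') (hb : b ≤ b') : comm a b ≤ comm a' b' :=
  calc comm a b ≤ comm a' b := comm_mono_left ha b
    _ = comm b a' := comm_comm _ _
    _ ≤ comm b' a' := comm_mono_left hb a'
    _ = comm a' b' := comm_comm _ _

theorem comm_sup_sup_le (q u v : C) : comm (q ⊔ u) (q ⊔ v) ≤ q ⊔ comm u v := by
  rw [comm_sup, comm_comm u, comm_sup, comm_comm v u]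
  exact sup_le ((comm_le_left _ _).trans le_sup_left)
    (sup_le_sup_right (comm_le_left q u) _)

theorem comm_ann_eq_bot (a : C) : comm a (ann a) = ⊥ := by
  rw [comm_comm, ann, resid, comm_sSup]
  exact le_bot_iff.1 (iSup₂_le fun c hc => (comm_comm c a).trans_le hc)

theorem cpow_antitone (a : C) : Antitone (cpow a) :=
  antitone_nat_of_succ_le fun _ => comm_le_left _ _

theorem cpow_mono {a b : C} (h : a ≤ b) (n : ℕ) : cpow a n ≤ cpow b n := by
  induction n with
  | zero => exact h
  | succ n ih => exact comm_mono ih ih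

theorem cpow_isCompact {a : C} (h : IsCompactElement a) (n : ℕ) :
    IsCompactElement (cpow a n) := by
  induction n with
  | zero => exact h
  | succ n ih => exact comm_isCompact _ _ ih ih

theorem IsPrime.le_of_cpow_le {p a : C} (hp : IsPrime p) {n : ℕ} (h : cpow a n ≤ p) :
    a ≤ p := by
  induction n with
  | zero => exact h
  | succ n ih => exact (hp.2 _ _ h).elim ih ih

theorem IsPrime.O_le {p : C} (hp : IsPrime p) : O p ≤ p :=
  sSup_le fun a ha => (hp.2 a (ann a) ((comm_ann_eq_bot a).trans_le bot_le)).resolve_right ha.2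

theorem exists_isPrime_le_of_forall_not_le {S : Set C} {x : C}
    (hSc : ∀ s ∈ S, IsCompactElement s) (hS : ∀ s ∈ S, ∀ t ∈ S, comm s t ∈ S)
    (hne : S.Nonempty) (hx : ∀ s ∈ S, ¬ s ≤ x) :
    ∃ q : C, IsPrime q ∧ x ≤ q ∧ ∀ s ∈ S, ¬ s ≤ q := by
  obtain ⟨q, hxq, hqS, hmax⟩ := zorn_le_nonempty₀ {y : C | ∀ s ∈ S, ¬ s ≤ y}
    (fun c hc hchain y hy => ⟨sSup c, fun s hs hle => by
      obtain ⟨z, hz, hsz⟩ := (isCompactElement_iff_le_of_directed_sSup_le C s).1 (hSc s hs)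
        c ⟨y, hy⟩ hchain.directedOn hle
      exact hc hz s hs hsz, fun _ => le_sSup⟩) x hx
  have escape : ∀ w, ¬ w ≤ q → ∃ s ∈ S, s ≤ q ⊔ w := fun w hw => by
    by_contra! h
    exact hw (le_sup_right.trans (hmax h le_sup_left))
  obtain ⟨s₀, hs₀⟩ := hne
  refine ⟨q, ⟨fun htop => hqS s₀ hs₀ (htop ▸ le_top), fun u v huv => ?_⟩, hxq, hqS⟩
  by_contra! h
  obtain ⟨s, hs, hsu⟩ := escape u h.1
  obtain ⟨t, ht, htv⟩ := escape v h.2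
  exact hqS _ (hS s hs t ht)
    ((comm_mono hsu htv).trans ((comm_sup_sup_le q u v).trans (sup_le le_rfl huv)))

theorem exists_isPrime_le_of_ne_top {x : C} (hx : x ≠ ⊤) : ∃ m : C, IsPrime m ∧ x ≤ m := by
  obtain ⟨m, hm, hxm, -⟩ := exists_isPrime_le_of_forall_not_le (S := ({⊤} : Set C))
    (by rintro s rfl; exact top_isCompact) (by rintro s rfl t rfl; exact comm_top (⊤ : C))
    (Set.singleton_nonempty _) (by rintro s rfl; exact fun h => hx (top_unique h))
  exact ⟨m, hm, hxm⟩

theorem IsMinPrime.exists_cpow_comm_eq_bot {p a : C} (hp : IsMinPrime p)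
    (ha : IsCompactElement a) (hap : a ≤ p) :
    ∃ b : C, IsCompactElement b ∧ ¬ b ≤ p ∧ ∃ n : ℕ, cpow (comm a b) n = ⊥ := by
  by_contra! H
  set S : Set C := {s | IsCompactElement s ∧
    ∃ b : C, IsCompactElement b ∧ ¬ b ≤ p ∧ ∃ n : ℕ, cpow (comm a b) n ≤ s}
  have mem_of_not_le : ∀ b, IsCompactElement b → ¬ b ≤ p → b ∈ S := fun b hb hbp =>
    ⟨hb, b, hb, hbp, 0, comm_le_right a b⟩
  have a_mem : a ∈ S :=
    ⟨ha, ⊤, top_isCompact, fun h => hp.1.1 (top_unique h), 0, (comm_top a).le⟩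
  have comm_mem : ∀ s ∈ S, ∀ t ∈ S, comm s t ∈ S := by
    rintro s ⟨hs, b, hb, hbp, n, hn⟩ t ⟨ht, b', hb', hb'p, n', hn'⟩
    have shrink : ∀ {c k}, comm b b' ≤ c → k ≤ max n n' →
        cpow (comm a (comm b b')) (max n n') ≤ cpow (comm a c) k := fun hc hk =>
      (cpow_mono (comm_mono le_rfl hc) _).trans (cpow_antitone _ hk)
    refine ⟨comm_isCompact s t hs ht, comm b b', comm_isCompact b b' hb hb',
      fun h => (hp.1.2 b b' h).elim hbp hb'p, max n n' + 1, ?_⟩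
    exact comm_mono ((shrink (comm_le_left b b') (le_max_left n n')).trans hn)
      ((shrink (comm_le_right b b') (le_max_right n n')).trans hn')
  obtain ⟨q, hq, -, hqS⟩ := exists_isPrime_le_of_forall_not_le (x := ⊥) (fun s hs => hs.1)
    comm_mem ⟨a, a_mem⟩ fun s ⟨_, b, hb, hbp, n, hn⟩ hs =>
      H b hb hbp n (le_bot_iff.1 (hn.trans hs))
  have hqp : q ≤ p := le_iff_compact_le_imp.2 fun b hb hbq =>
    by_contra fun hbp => hqS b (mem_of_not_le b hb hbp) hbq
  exact hqS a a_mem (hp.2 q hq hqp ▸ hap)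

theorem IsMinPrime.le_of_O_le (hstar : Star C) {p m : C} (hp : IsMinPrime p)
    (hm : IsPrime m) (h : O p ≤ m) : p ≤ m := by
  refine le_iff_compact_le_imp.2 fun a ha hap => ?_
  obtain ⟨b, hb, hbp, n, hn⟩ := hp.exists_cpow_comm_eq_bot ha hap
  obtain ⟨k, hk⟩ := hstar a b ha hb n
  have hann : cpow b k ≤ ann (cpow a k) := le_sSup (hk.trans hn.le)
  have hO : cpow a k ≤ O p :=
    le_sSup ⟨cpow_isCompact ha k, fun h => hbp (hp.1.le_of_cpow_le (hann.trans h))⟩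
  exact hm.le_of_cpow_le (hO.trans h)

theorem isPrime_sInf_of_isChain {c : Set C} (hc : ∀ p ∈ c, IsPrime p)
    (hchain : IsChain (· ≤ ·) c) (hne : c.Nonempty) : IsPrime (sInf c) := by
  obtain ⟨p, hp⟩ := hne
  refine ⟨fun htop => (hc p hp).1 (top_unique (htop ▸ sInf_le hp)), fun u v huv => ?_⟩
  simp only [le_sInf_iff]
  by_contra! h
  obtain ⟨⟨z, hz, hu⟩, ⟨w, hw, hv⟩⟩ := h
  rcases hchain.total hz hw with hzw | hwz
  · exact ((hc z hz).2 u v (huv.trans (sInf_le hz))).elim hu fun h => hv (h.trans hzw)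
  · exact ((hc w hw).2 u v (huv.trans (sInf_le hw))).elim (fun h => hu (h.trans hwz)) hv

theorem exists_isMinPrime_le {r : C} (hr : IsPrime r) : ∃ q : C, IsMinPrime q ∧ q ≤ r := by
  -- Zorn in `Cᵒᵈ`, where the `sSup` of a chain of primes is its `sInf` in `C`.
  obtain ⟨q, -, hq, hmin⟩ := zorn_le_nonempty₀ (α := Cᵒᵈ)
    {q | IsPrime (OrderDual.ofDual q) ∧ OrderDual.ofDual q ≤ r}
    (fun c hc hchain y hy => ⟨sSup c,
      ⟨isPrime_sInf_of_isChain (fun p hp => (hc hp).1) hchain.symm ⟨y, hy⟩,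
        (sInf_le (α := C) hy).trans (hc hy).2⟩,
      fun _ hz => le_sSup hz⟩)
    (OrderDual.toDual r) ⟨hr, le_rfl⟩
  exact ⟨q, ⟨hq.1, fun q' hq' hq'q => le_antisymm hq'q (hmin ⟨hq', hq'q.trans hq.2⟩ hq'q)⟩,
    hq.2⟩

theorem statement14 (hstar : Star C) :
    MP C ↔ ∀ p q : C, IsMinPrime p → IsMinPrime q → p ≠ q → O p ⊔ O q = ⊤ := by
  constructor
  · intro hmp p q hp hq hpq
    by_contra hne
    obtain ⟨m, hm, hle⟩ := exists_isPrime_le_of_ne_top hne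
    obtain ⟨_, -, huniq⟩ := hmp m hm
    exact hpq ((huniq p ⟨hp, hp.le_of_O_le hstar hm (le_sup_left.trans hle)⟩).trans
      (huniq q ⟨hq, hq.le_of_O_le hstar hm (le_sup_right.trans hle)⟩).symm)
  · intro hO r hr
    obtain ⟨q, hq, hqr⟩ := exists_isMinPrime_le hr
    refine ⟨q, ⟨hq, hqr⟩, fun q' ⟨hq', hq'r⟩ => by_contra fun hne => hr.1 (top_unique ?_)⟩
    rw [← hO q' q hq' hq hne]
    exact sup_le (hq'.1.O_le.trans hq'r) (hq.1.O_le.trans hqr)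

end CommutatorLattice
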